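/- arXiv:2103.14694 — 4 statements merged into one kernel-verified Lean document; each statement's English description precedes it below -/
import Mathlib

section
/- Let D be a drawing on [0,a]×[0,b] all of whose nodes are of one of the eleven continuous node types, let W(D) be its Kirchhoff subspace and d = dim W(D). A parametrization of D is an injective map τ from {1,…,d} to the segments of D such that the linear map π_τ : W(D) → ℝ^d, w ↦ (w(τ(1)),…,w(τ(d))), is a linear isomorphism. Then for any two parametrizations τ and τ′ of D, the linear automorphism π_τ ∘ π_{τ′}^{-1} of ℝ^d satisfies |det(π_τ ∘ π_{τ′}^{-1})| = 1. -/
open scoped Classical BigOperators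
open MeasureTheory

noncomputable section

/-- A weighted (vertical or horizontal) segment in the plane.  If `vert` is `true`
the segment is the vertical segment `{fixed} × [lo, hi]` with intensity `s`;
otherwise it is the horizontal segment `[lo, hi] × {fixed}` with intensity `s`. -/
structure Seg where
  vert : Bool
  fixed : ℝ
  lo : ℝ
  hi : ℝ
  s : ℝ

namespace Seg

/-- lower / left endpoint -/
def pLo (σ : Seg) : ℝ × ℝ := if σ.vert then (σ.fixed, σ.lo) else (σ.lo, σ.fixed)

/-- upper / right endpoint -/
def pHi (σ : Seg) : ℝ × ℝ := if σ.vert then (σ.fixed, σ.hi) else (σ.hi, σ.fixed)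

def length (σ : Seg) : ℝ := σ.hi - σ.lo

/-- relative interior of the segment -/
def relint (σ : Seg) : Set (ℝ × ℝ) :=
  if σ.vert then {p | p.1 = σ.fixed ∧ σ.lo < p.2 ∧ p.2 < σ.hi}
  else {p | p.2 = σ.fixed ∧ σ.lo < p.1 ∧ p.1 < σ.hi}

/-- the closed segment, as a set of points -/
def closedSeg (σ : Seg) : Set (ℝ × ℝ) :=
  if σ.vert then {p | p.1 = σ.fixed ∧ σ.lo ≤ p.2 ∧ p.2 ≤ σ.hi}
  else {p | p.2 = σ.fixed ∧ σ.lo ≤ p.1 ∧ p.1 ≤ σ.hi}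

/-- the segment is a genuine weighted segment of the box `[0,a] × [0,b]` -/
def InBox (a b : ℝ) (σ : Seg) : Prop :=
  σ.lo < σ.hi ∧
  (if σ.vert then 0 ≤ σ.fixed ∧ σ.fixed ≤ a ∧ 0 ≤ σ.lo ∧ σ.hi ≤ b
   else 0 ≤ σ.fixed ∧ σ.fixed ≤ b ∧ 0 ≤ σ.lo ∧ σ.hi ≤ a)

end Seg

/-- segments of `D` arriving at `p` from the south -/
def fromS (D : Finset Seg) (p : ℝ × ℝ) : Finset Seg :=
  D.filter fun σ => σ.vert ∧ σ.pHi = p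

/-- segments of `D` leaving `p` to the north -/
def toN (D : Finset Seg) (p : ℝ × ℝ) : Finset Seg :=
  D.filter fun σ => σ.vert ∧ σ.pLo = p

/-- segments of `D` arriving at `p` from the west -/
def fromW (D : Finset Seg) (p : ℝ × ℝ) : Finset Seg :=
  D.filter fun σ => ¬σ.vert ∧ σ.pHi = p

/-- segments of `D` leaving `p` to the east -/
def toE (D : Finset Seg) (p : ℝ × ℝ) : Finset Seg :=
  D.filter fun σ => ¬σ.vert ∧ σ.pLo = p

/-- `p` lies in the open rectangle `(0,a) × (0,b)` -/
def InteriorPt (a b : ℝ) (p : ℝ × ℝ) : Prop :=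
  0 < p.1 ∧ p.1 < a ∧ 0 < p.2 ∧ p.2 < b

/-- Kirchhoff's node law at `p` -/
def Kirchhoff (D : Finset Seg) (p : ℝ × ℝ) : Prop :=
  (∑ σ ∈ fromS D p, σ.s) + (∑ σ ∈ fromW D p, σ.s)
    = (∑ σ ∈ toN D p, σ.s) + (∑ σ ∈ toE D p, σ.s)

/-- `p` is a node of `D` (an endpoint of some segment of `D`) -/
def IsNode (D : Finset Seg) (p : ℝ × ℝ) : Prop :=
  ∃ σ ∈ D, σ.pLo = p ∨ σ.pHi = p

/-- `D` is a drawing on the box `[0,a] × [0,b]` -/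
def IsDrawing (a b : ℝ) (D : Finset Seg) : Prop :=
  (∀ σ ∈ D, σ.InBox a b) ∧
  (∀ σ ∈ D, ∀ τ ∈ D, σ ≠ τ → Disjoint σ.relint τ.relint) ∧
  (∀ σ ∈ D, ∀ τ ∈ D, σ.pLo ∉ τ.relint ∧ σ.pHi ∉ τ.relint) ∧
  (∀ p, InteriorPt a b p → Kirchhoff D p)

/-- the four degrees (from south, from west, to north, to east) of a point -/
def Deg (D : Finset Seg) (p : ℝ × ℝ) : ℕ × ℕ × ℕ × ℕ :=
  ((fromS D p).card, (fromW D p).card, (toN D p).card, (toE D p).card)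

def IsVertEntry (D : Finset Seg) (p : ℝ × ℝ) : Prop := p.2 = 0 ∧ (toN D p).Nonempty
def IsVertExit (b : ℝ) (D : Finset Seg) (p : ℝ × ℝ) : Prop := p.2 = b ∧ (fromS D p).Nonempty
def IsHorEntry (D : Finset Seg) (p : ℝ × ℝ) : Prop := p.1 = 0 ∧ (toE D p).Nonempty
def IsHorExit (a : ℝ) (D : Finset Seg) (p : ℝ × ℝ) : Prop := p.1 = a ∧ (fromW D p).Nonempty
def IsVertSplit (a b : ℝ) (D : Finset Seg) (p : ℝ × ℝ) : Prop :=
  InteriorPt a b p ∧ Deg D p = (1, 0, 1, 1)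
def IsVertTurn (a b : ℝ) (D : Finset Seg) (p : ℝ × ℝ) : Prop :=
  InteriorPt a b p ∧ Deg D p = (1, 0, 0, 1)
def IsVertCoal (a b : ℝ) (D : Finset Seg) (p : ℝ × ℝ) : Prop :=
  InteriorPt a b p ∧ Deg D p = (1, 1, 1, 0)
def IsHorSplit (a b : ℝ) (D : Finset Seg) (p : ℝ × ℝ) : Prop :=
  InteriorPt a b p ∧ Deg D p = (0, 1, 1, 1)
def IsHorTurn (a b : ℝ) (D : Finset Seg) (p : ℝ × ℝ) : Prop :=
  InteriorPt a b p ∧ Deg D p = (0, 1, 1, 0)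
def IsHorCoal (a b : ℝ) (D : Finset Seg) (p : ℝ × ℝ) : Prop :=
  InteriorPt a b p ∧ Deg D p = (1, 1, 0, 1)
def IsCrossing (a b : ℝ) (D : Finset Seg) (p : ℝ × ℝ) : Prop :=
  InteriorPt a b p ∧ Deg D p = (1, 1, 1, 1)
def IsSpontSplit (a b : ℝ) (D : Finset Seg) (p : ℝ × ℝ) : Prop :=
  InteriorPt a b p ∧ Deg D p = (0, 0, 1, 1)
def IsDoubleCoal (a b : ℝ) (D : Finset Seg) (p : ℝ × ℝ) : Prop :=
  InteriorPt a b p ∧ Deg D p = (1, 1, 0, 0)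

/-- `p` is a node of one of the eleven continuous node types -/
def ContinuousNode (a b : ℝ) (D : Finset Seg) (p : ℝ × ℝ) : Prop :=
  IsVertEntry D p ∨ IsVertExit b D p ∨ IsHorEntry D p ∨ IsHorExit a D p ∨
  IsVertSplit a b D p ∨ IsVertTurn a b D p ∨ IsVertCoal a b D p ∨
  IsHorSplit a b D p ∨ IsHorTurn a b D p ∨ IsHorCoal a b D p ∨ IsCrossing a b D p

/-- `p` is a node of one of the thirteen node types -/
def Node13 (a b : ℝ) (D : Finset Seg) (p : ℝ × ℝ) : Prop :=
  ContinuousNode a b D p ∨ IsSpontSplit a b D p ∨ IsDoubleCoal a b D p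

def nVE (D : Finset Seg) : ℕ := {p | IsVertEntry D p}.ncard
def nVX (b : ℝ) (D : Finset Seg) : ℕ := {p | IsVertExit b D p}.ncard
def nHE (D : Finset Seg) : ℕ := {p | IsHorEntry D p}.ncard
def nHX (a : ℝ) (D : Finset Seg) : ℕ := {p | IsHorExit a D p}.ncard
def nVSp (a b : ℝ) (D : Finset Seg) : ℕ := {p | IsVertSplit a b D p}.ncard
def nVT (a b : ℝ) (D : Finset Seg) : ℕ := {p | IsVertTurn a b D p}.ncard
def nVC (a b : ℝ) (D : Finset Seg) : ℕ := {p | IsVertCoal a b D p}.ncard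
def nHSp (a b : ℝ) (D : Finset Seg) : ℕ := {p | IsHorSplit a b D p}.ncard
def nHT (a b : ℝ) (D : Finset Seg) : ℕ := {p | IsHorTurn a b D p}.ncard
def nHC (a b : ℝ) (D : Finset Seg) : ℕ := {p | IsHorCoal a b D p}.ncard
def nCr (a b : ℝ) (D : Finset Seg) : ℕ := {p | IsCrossing a b D p}.ncard
def nSS (a b : ℝ) (D : Finset Seg) : ℕ := {p | IsSpontSplit a b D p}.ncard
def nDC (a b : ℝ) (D : Finset Seg) : ℕ := {p | IsDoubleCoal a b D p}.ncard


/-- The Kirchhoff subspace of a drawing `D`: all reassignments of real intensities to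
the segments of `D` satisfying Kirchhoff's node law at every interior node. -/
def kirchSub (a b : ℝ) (D : Finset Seg) : Submodule ℝ ({σ // σ ∈ D} → ℝ) where
  carrier := {w | ∀ p : ℝ × ℝ, InteriorPt a b p →
    (∑ σ ∈ Finset.univ.filter (fun σ : {σ // σ ∈ D} => σ.1.vert ∧ σ.1.pHi = p), w σ) +
    (∑ σ ∈ Finset.univ.filter (fun σ : {σ // σ ∈ D} => ¬σ.1.vert ∧ σ.1.pHi = p), w σ) =
    (∑ σ ∈ Finset.univ.filter (fun σ : {σ // σ ∈ D} => σ.1.vert ∧ σ.1.pLo = p), w σ) +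
    (∑ σ ∈ Finset.univ.filter (fun σ : {σ // σ ∈ D} => ¬σ.1.vert ∧ σ.1.pLo = p), w σ)}
  add_mem' := by
    intro u v hu hv p hp
    have h1 := hu p hp
    have h2 := hv p hp
    simp only [Set.mem_setOf_eq, Pi.add_apply, Finset.sum_add_distrib] at *
    linarith
  zero_mem' := by
    intro p hp
    simp
  smul_mem' := by
    intro c u hu p hp
    have h := hu p hp
    simp only [Set.mem_setOf_eq, Pi.smul_apply, smul_eq_mul, ← Finset.mul_sum] at *
    rw [← mul_add, ← mul_add, h]


/-- evaluation of an intensity assignment in the Kirchhoff subspace on a chosen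
family of segments -/
def evalMap (a b : ℝ) (D : Finset Seg) (d : ℕ) (τ : Fin d → {σ // σ ∈ D}) :
    kirchSub a b D →ₗ[ℝ] (Fin d → ℝ) :=
  (LinearMap.pi fun i => LinearMap.proj (τ i)).comp (kirchSub a b D).subtype

/-- a parametrization of a drawing: an injective choice of `d = dim W(D)` segments on
which the evaluation map of the Kirchhoff subspace is a linear isomorphism -/
def IsParam (a b : ℝ) (D : Finset Seg) (d : ℕ) (τ : Fin d → {σ // σ ∈ D}) : Prop :=
  Function.Injective τ ∧ Function.Bijective (evalMap a b D d τ)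

/-!
The Kirchhoff subspace `W(D)` is the kernel of the signed incidence matrix of the directed graph
formed by the segments of `D`, with one row per point of the open rectangle. Incidence matrices
are totally unimodular, and so is the matrix obtained by appending the evaluation rows at the
segments of a parametrization `τ`. That stacked matrix is injective on all of `ℝ^D`, so by
Cramer's rule on a nonsingular square submatrix (of determinant `±1`), every `w ∈ W(D)` with
integer values on the segments of `τ` is integer-valued. Hence `π_τ ∘ π_τ'⁻¹` and its inverse
both map `ℤ^d` into itself, so their determinants are integers with product `1`.
-/

def intPoints (ι R : Type*) [Ring R] : Set (ι → R) :=
  Set.range fun z : ι → ℤ => fun i => (z i : R)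

lemma mul_mem_range_signTypeCast {R : Type*} [CommRing R] {x y : R}
    (hx : x ∈ Set.range SignType.cast) (hy : y ∈ Set.range SignType.cast) :
    x * y ∈ Set.range SignType.cast := by
  obtain ⟨s, rfl⟩ := hx
  obtain ⟨t, rfl⟩ := hy
  exact ⟨s * t, SignType.coe_mul s t⟩

lemma eq_one_or_eq_neg_one_of_mem_range_signTypeCast {R : Type*} [CommRing R] {x : R}
    (hx : x ∈ Set.range SignType.cast) (h0 : x ≠ 0) : x = 1 ∨ x = -1 := by
  obtain ⟨s | s | s, rfl⟩ := hx <;> simp_all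

namespace Matrix

variable {m n R : Type*}

lemma det_mem_range_signTypeCast_of_col [CommRing R] [IsDomain R] {k : ℕ}
    (M : Matrix (Fin k) (Fin k) R)
    (hsign : ∀ i j, M i j ∈ Set.range SignType.cast)
    (hone : ∀ i i' j, M i j = 1 → M i' j = 1 → i = i')
    (hneg : ∀ i i' j, M i j = -1 → M i' j = -1 → i = i') :
    M.det ∈ Set.range SignType.cast := by
  induction k with
  | zero => exact ⟨1, by simp⟩
  | succ k ih =>
    by_cases hcol : ∃ j, ∀ i i', M i j ≠ 0 → M i' j ≠ 0 → i = i'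
    · obtain ⟨j, hj⟩ := hcol
      by_cases hzero : ∀ i, M i j = 0
      · exact ⟨0, (det_eq_zero_of_column_eq_zero j hzero).symm⟩
      push Not at hzero
      obtain ⟨i, hi⟩ := hzero
      have hexp : M.det = (-1) ^ (i + j : ℕ) * M i j *
          (M.submatrix i.succAbove j.succAbove).det := by
        rw [det_succ_column M j, Fintype.sum_eq_single i fun i' hi' => ?_]
        rw [show M i' j = 0 from not_imp_comm.mp (hj i' i · hi) hi', mul_zero, zero_mul]
      have hminor := ih (M.submatrix i.succAbove j.succAbove) (fun _ _ => hsign _ _)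
        (fun _ _ _ h h' => Fin.succAbove_right_injective (hone _ _ _ h h'))
        (fun _ _ _ h h' => Fin.succAbove_right_injective (hneg _ _ _ h h'))
      rw [hexp]
      refine mul_mem_range_signTypeCast (mul_mem_range_signTypeCast ?_ (hsign i j)) hminor
      exact ⟨(-1) ^ (i + j : ℕ), by simp⟩
    · -- every column contains exactly one `1` and one `-1`, so the rows sum to zero
      push Not at hcol
      refine ⟨0, (exists_vecMul_eq_zero_iff.mp ⟨1, one_ne_zero, funext fun j => ?_⟩).symm⟩
      have hpm i (h : M i j ≠ 0) := eq_one_or_eq_neg_one_of_mem_range_signTypeCast (hsign i j) h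
      obtain ⟨p, q, hpq, hp, hq⟩ : ∃ p q, p ≠ q ∧ M p j = 1 ∧ M q j = -1 := by
        obtain ⟨i, i', hi, hi', hii'⟩ := hcol j
        rcases hpm i hi with h | h <;> rcases hpm i' hi' with h' | h'
        exacts [absurd (hone _ _ _ h h') hii', ⟨i, i', hii', h, h'⟩, ⟨i', i, hii'.symm, h', h⟩,
          absurd (hneg _ _ _ h h') hii']
      simp only [vecMul, dotProduct, Pi.one_apply, one_mul, Pi.zero_apply]
      rw [Finset.sum_eq_add_of_mem p q (Finset.mem_univ _)
        (Finset.mem_univ _) hpq fun r _ hr => ?_, hp, hq, add_neg_cancel]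
      by_contra h
      rcases hpm r h with h' | h'
      exacts [hr.1 (hone _ _ _ h' hp), hr.2 (hneg _ _ _ h' hq)]

variable {V : Type*}

def signedIncidence [Ring R] [DecidableEq V] (head tail : n → V) : Matrix V n R :=
  of fun v e => (if head e = v then 1 else 0) - (if tail e = v then 1 else 0)

section signedIncidence

variable [CommRing R] [DecidableEq V] {head tail : n → V} {v : V} {e : n}

lemma signedIncidence_mem_range_signTypeCast :
    (signedIncidence head tail : Matrix V n R) v e ∈ Set.range SignType.cast := by
  simp only [signedIncidence, of_apply]
  split_ifs
  exacts [⟨0, by simp⟩, ⟨1, by simp⟩, ⟨-1, by simp⟩, ⟨0, by simp⟩]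

variable [CharZero R]

lemma head_eq_of_signedIncidence_eq_one
    (h : (signedIncidence head tail : Matrix V n R) v e = 1) : head e = v := by
  simp only [signedIncidence, of_apply] at h
  split_ifs at h <;> first | assumption | norm_num at h

lemma tail_eq_of_signedIncidence_eq_neg_one
    (h : (signedIncidence head tail : Matrix V n R) v e = -1) : tail e = v := by
  simp only [signedIncidence, of_apply] at h
  split_ifs at h <;> first | assumption | norm_num at h

theorem isTotallyUnimodular_signedIncidence [IsDomain R] (head tail : n → V) :
    (signedIncidence head tail : Matrix V n R).IsTotallyUnimodular := fun _ _ _ hf _ =>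
  det_mem_range_signTypeCast_of_col _ (fun _ _ => signedIncidence_mem_range_signTypeCast)
    (fun _ _ _ h h' => hf <| (head_eq_of_signedIncidence_eq_one h).symm.trans
      (head_eq_of_signedIncidence_eq_one h'))
    (fun _ _ _ h h' => hf <| (tail_eq_of_signedIncidence_eq_neg_one h).symm.trans
      (tail_eq_of_signedIncidence_eq_neg_one h'))

end signedIncidence

section Field

variable {K : Type*} [Field K] [Fintype n]

theorem span_row_eq_top_of_injective_mulVec {A : Matrix m n K} (hA : Function.Injective A.mulVec) :
    Submodule.span K (Set.range A.row) = ⊤ := by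
  classical
  rw [← Submodule.dualAnnihilator_eq_bot_iff, Submodule.eq_bot_iff]
  intro φ hφ
  rw [Submodule.mem_dualAnnihilator] at hφ
  set y : n → K := fun i => φ fun j => if i = j then 1 else 0
  have hφy (v : n → K) : φ v = v ⬝ᵥ y := φ.pi_apply_eq_sum_univ v
  have hy : y = 0 := hA <| funext fun i => by
    rw [mulVec_zero, Pi.zero_apply, mulVec, ← hφy]
    exact hφ _ (Submodule.subset_span ⟨i, rfl⟩)
  refine LinearMap.pi_ext fun j x => ?_
  rw [hφy, hy, dotProduct_zero, LinearMap.zero_apply]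

theorem exists_submatrix_det_ne_zero_of_injective_mulVec [DecidableEq n] {A : Matrix m n K}
    (hA : Function.Injective A.mulVec) : ∃ r : n → m, (A.submatrix r id).det ≠ 0 := by
  obtain ⟨κ, a, -, hspan, hli⟩ := exists_linearIndependent' K A.row
  let e := (Module.Basis.mk hli (by rw [hspan, span_row_eq_top_of_injective_mulVec hA])).indexEquiv
    (Pi.basisFun K n)
  refine ⟨a ∘ e.symm, ?_⟩
  rw [← isUnit_iff_ne_zero, ← isUnit_iff_isUnit_det, ← linearIndependent_rows_iff_isUnit]
  exact hli.comp e.symm e.symm.injective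

theorem IsTotallyUnimodular.mem_intPoints_of_mulVec_mem [CharZero K] [DecidableEq n]
    {A : Matrix m n K} (hA : A.IsTotallyUnimodular) (hinj : Function.Injective A.mulVec)
    {x : n → K} (hx : A *ᵥ x ∈ intPoints m K) : x ∈ intPoints n K := by
  obtain ⟨r, hr⟩ := exists_submatrix_det_ne_zero_of_injective_mulVec hinj
  set S := A.submatrix r id
  obtain ⟨Z, hZ⟩ : ∃ Z : Matrix n n ℤ, Z.map (Int.castRingHom K) = S := by
    have h i j : ∃ z : ℤ, (z : K) = S i j := by
      obtain ⟨s, hs⟩ := hA.apply (r i) j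
      exact ⟨s, by rw [SignType.intCast_cast, hs]; rfl⟩
    choose Z hZ using h
    exact ⟨Z, Matrix.ext hZ⟩
  -- `S` is a nonsingular square submatrix of `A`, so its determinant is `±1` and `S⁻¹` is integral
  have hdet : (Z.det : K) = S.det := by
    rw [← hZ]
    exact (Int.castRingHom K).map_det Z
  have hunit : IsUnit Z.det := by
    obtain ⟨s, hs⟩ := (isTotallyUnimodular_iff_fintype A).mp hA n r id
    rw [← hdet, ← SignType.intCast_cast, Int.cast_inj] at hs
    rw [← hdet, ← hs] at hr
    rw [← hs]
    rcases s with _ | _ | _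
    · simp at hr
    all_goals simp
  have hinv : Z⁻¹.map (Int.castRingHom K) * S = 1 := by
    rw [← hZ, ← Matrix.map_mul, Matrix.nonsing_inv_mul Z hunit, Matrix.map_one _ (map_zero _)
      (map_one _)]
  obtain ⟨c, hc⟩ := hx
  refine ⟨Z⁻¹ *ᵥ (c ∘ r), funext fun j => ?_⟩
  calc ((Z⁻¹ *ᵥ (c ∘ r)) j : K) = (Z⁻¹.map (Int.castRingHom K) *ᵥ fun i => (c (r i) : K)) j :=
        (Int.castRingHom K).map_mulVec _ _ _
    _ = (Z⁻¹.map (Int.castRingHom K) *ᵥ (S *ᵥ x)) j := by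
        congr 2
        exact funext fun i => congrFun hc (r i)
    _ = x j := by rw [mulVec_mulVec, hinv, one_mulVec]

end Field

end Matrix

namespace LinearMap

variable {ι R : Type*} [Fintype ι] [DecidableEq ι] [CommRing R]

theorem det_mem_range_intCast {f : (ι → R) →ₗ[R] ι → R}
    (hf : Set.MapsTo f (intPoints ι R) (intPoints ι R)) :
    LinearMap.det f ∈ Set.range (Int.cast : ℤ → R) := by
  have h i j : ∃ z : ℤ, (z : R) = toMatrix' f i j := by
    have hj : Pi.single j 1 ∈ intPoints ι R := ⟨Pi.single j 1, by ext k; simp [Pi.single_apply]⟩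
    obtain ⟨c, hc⟩ := hf hj
    exact ⟨c i, by rw [toMatrix'_apply, ← hc]⟩
  choose Z hZ using h
  rw [← det_toMatrix', ← Matrix.ext hZ]
  exact ⟨Matrix.det Z, (Int.castRingHom R).map_det Z⟩

end LinearMap

namespace LinearEquiv

variable {ι R : Type*} [Fintype ι] [DecidableEq ι] [CommRing R]

theorem abs_det_eq_one_of_mapsTo_intPoints [LinearOrder R] [IsStrictOrderedRing R]
    (f : (ι → R) ≃ₗ[R] ι → R) (hf : Set.MapsTo f (intPoints ι R) (intPoints ι R))
    (hf' : Set.MapsTo f.symm (intPoints ι R) (intPoints ι R)) :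
    |LinearMap.det (f : (ι → R) →ₗ[R] ι → R)| = 1 := by
  obtain ⟨p, hp⟩ := LinearMap.det_mem_range_intCast hf
  obtain ⟨q, hq⟩ := LinearMap.det_mem_range_intCast hf'
  have hpq : p * q = 1 := by
    exact_mod_cast (show (p * q : R) = 1 by
      rw [hp, hq, ← LinearMap.det_comp, f.comp_symm, LinearMap.det_id])
  rcases Int.eq_one_or_neg_one_of_mul_eq_one hpq with rfl | rfl <;> simp [← hp]

end LinearEquiv

open Matrix

def kirchMatrix (a b : ℝ) (D : Finset Seg) :
    Matrix {p : ℝ × ℝ // InteriorPt a b p} {σ // σ ∈ D} ℝ :=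
  (signedIncidence (fun σ : {σ // σ ∈ D} => σ.1.pHi) fun σ => σ.1.pLo).submatrix Subtype.val id

lemma mem_kirchSub_iff {a b : ℝ} {D : Finset Seg} {w : {σ // σ ∈ D} → ℝ} :
    w ∈ kirchSub a b D ↔ kirchMatrix a b D *ᵥ w = 0 := by
  rw [funext_iff, Subtype.forall]
  refine forall₂_congr fun p hp => ?_
  rw [← sub_eq_zero, Pi.zero_apply]
  convert Iff.rfl using 2
  simp only [mulVec, dotProduct, kirchMatrix, submatrix_apply, signedIncidence, of_apply,
    Finset.sum_filter, ← Finset.sum_add_distrib, ← Finset.sum_sub_distrib]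
  refine Finset.sum_congr rfl fun σ _ => ?_
  by_cases σ.1.vert <;> split_ifs <;> simp_all

lemma isTotallyUnimodular_kirchMatrix (a b : ℝ) (D : Finset Seg) :
    (kirchMatrix a b D).IsTotallyUnimodular :=
  (isTotallyUnimodular_signedIncidence _ _).submatrix _ _

namespace IsParam

variable {a b : ℝ} {D : Finset Seg} {d : ℕ} {τ τ' : Fin d → {σ // σ ∈ D}}

def equiv (hτ : IsParam a b D d τ) : kirchSub a b D ≃ₗ[ℝ] Fin d → ℝ :=
  LinearEquiv.ofBijective _ hτ.2

theorem mem_intPoints (hτ : IsParam a b D d τ) {w : {σ // σ ∈ D} → ℝ}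
    (hw : w ∈ kirchSub a b D) (hwτ : w ∘ τ ∈ intPoints (Fin d) ℝ) :
    w ∈ intPoints {σ // σ ∈ D} ℝ := by
  -- `B` stacks the Kirchhoff constraints on the evaluations at the parameter segments
  set B := (fromRows (kirchMatrix a b D) 1).submatrix (Sum.map id τ) id
  have hB v : B *ᵥ v = Sum.elim (kirchMatrix a b D *ᵥ v) (v ∘ τ) := by
    funext i
    change (fromRows (kirchMatrix a b D) 1 *ᵥ v) (Sum.map id τ i) = _
    rcases i with i | i <;> simp [fromRows_mulVec]
  have hBinj : Function.Injective B.mulVec := by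
    refine (injective_iff_map_eq_zero B.mulVecLin).2 fun v hv => ?_
    rw [mulVecLin_apply, hB] at hv
    have hvmem : v ∈ kirchSub a b D := mem_kirchSub_iff.2 (funext fun i => congrFun hv (.inl i))
    have : (⟨v, hvmem⟩ : kirchSub a b D) = 0 :=
      hτ.2.1 (by rw [map_zero]; exact funext fun i => congrFun hv (.inr i))
    exact congrArg Subtype.val this
  obtain ⟨c, hc⟩ := hwτ
  refine ((fromRows_one_isTotallyUnimodular_iff _).2 (isTotallyUnimodular_kirchMatrix a b D)
    |>.submatrix _ _).mem_intPoints_of_mulVec_mem hBinj ⟨Sum.elim 0 c, ?_⟩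
  rw [hB, mem_kirchSub_iff.1 hw, ← hc]
  funext i
  rcases i with i | i <;> simp

theorem mapsTo_intPoints (hτ : IsParam a b D d τ) (hτ' : IsParam a b D d τ') :
    Set.MapsTo (hτ.equiv.symm ≪≫ₗ hτ'.equiv) (intPoints (Fin d) ℝ) (intPoints (Fin d) ℝ) := by
  intro x hx
  set w := hτ.equiv.symm x
  have hwτ : w.1 ∘ τ = x := hτ.equiv.apply_symm_apply x
  obtain ⟨z, hz⟩ := hτ.mem_intPoints w.2 (hwτ ▸ hx)
  exact ⟨z ∘ τ', funext fun i => congrFun hz (τ' i)⟩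

end IsParam

theorem abs_det_change_of_parametrization_general (a b : ℝ) (D : Finset Seg)
    (τ τ' : Fin (Module.finrank ℝ (kirchSub a b D)) → {σ // σ ∈ D})
    (hτ : IsParam a b D (Module.finrank ℝ (kirchSub a b D)) τ)
    (hτ' : IsParam a b D (Module.finrank ℝ (kirchSub a b D)) τ') :
    |LinearMap.det ((evalMap a b D (Module.finrank ℝ (kirchSub a b D)) τ).comp
      ((LinearEquiv.ofBijective
          (evalMap a b D (Module.finrank ℝ (kirchSub a b D)) τ') hτ'.2).symm.toLinearMap))|
      = 1 :=
  LinearEquiv.abs_det_eq_one_of_mapsTo_intPoints (hτ'.equiv.symm ≪≫ₗ hτ.equiv)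
    (hτ'.mapsTo_intPoints hτ) (hτ.mapsTo_intPoints hτ')

/-- the change-of-parametrization automorphism of `ℝ^d` has
determinant `±1`. -/
theorem abs_det_change_of_parametrization (a b : ℝ) (ha : 0 < a) (hb : 0 < b)
    (D : Finset Seg) (hD : IsDrawing a b D)
    (hnodes : ∀ p, IsNode D p → ContinuousNode a b D p)
    (τ τ' : Fin (Module.finrank ℝ (kirchSub a b D)) → {σ // σ ∈ D})
    (hτ : IsParam a b D (Module.finrank ℝ (kirchSub a b D)) τ)
    (hτ' : IsParam a b D (Module.finrank ℝ (kirchSub a b D)) τ') :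
    |LinearMap.det ((evalMap a b D (Module.finrank ℝ (kirchSub a b D)) τ).comp
      ((LinearEquiv.ofBijective
          (evalMap a b D (Module.finrank ℝ (kirchSub a b D)) τ') hτ'.2).symm.toLinearMap))|
      = 1 :=
  abs_det_change_of_parametrization_general a b D τ τ' hτ hτ'

end
end

section
/- Let X and Y be independent real random variables whose laws have densities g_V and g_H respectively with respect to Lebesgue measure, and let G(s) = ∫_ℝ g_V(s−t) g_H(t) dt. Then the Markov kernel κ from ℝ to ℝ defined by letting κ(s) be the measure with density t ↦ g_V(s−t)g_H(t)/G(s) whenever 0 < G(s) < ∞ (and an arbitrary fixed probability measure otherwise) is a regular conditional distribution of Y given X+Y; in particular κ(s) agrees with the conditional distribution of Y given X+Y for (law of X+Y)-almost every s. -/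
open MeasureTheory ProbabilityTheory
open scoped ENNReal

/-!
The law of `(X + Y, Y)` is the shear image of the product law of `(X, Y)`, so it has density
`(s, t) ↦ g_V (s - t) g_H t` with respect to Lebesgue measure on `ℝ²`. Disintegrating this density
along its first coordinate gives `G` as the density of `X + Y` and, wherever `0 < G s < ∞`, the
normalised section `t ↦ g_V (s - t) g_H t / G s` as the conditional law; the remaining `s` form a
null set for the law of `X + Y`. Uniqueness of disintegrations then identifies `κ` with
`condDistrib`.
-/

namespace MeasureTheory

variable {α β : Type*} [MeasurableSpace α] [MeasurableSpace β]

theorem Measure.map_withDensity_comp {μ : Measure α} {T : α → β} (hT : Measurable T)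
    {g : β → ℝ≥0∞} (hg : Measurable g) :
    (μ.withDensity (g ∘ T)).map T = (μ.map T).withDensity g := by
  ext s hs
  rw [Measure.map_apply hT hs, withDensity_apply _ (hT hs), withDensity_apply _ hs,
    setLIntegral_map hs hg hT]
  rfl

theorem lintegral_smul_eq_withDensity {ν : Measure β} {f : β → ℝ≥0∞} (hf : AEMeasurable f ν)
    (hfin : ∫⁻ b, f b ∂ν ≠ ∞) {η : Measure β}
    (hη : 0 < ∫⁻ b, f b ∂ν → η = ν.withDensity fun b => f b / ∫⁻ b, f b ∂ν) :
    (∫⁻ b, f b ∂ν) • η = ν.withDensity f := by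
  rcases eq_zero_or_pos (∫⁻ b, f b ∂ν) with hzero | hpos
  · rw [hzero, zero_smul, eq_comm, withDensity_eq_zero_iff hf]
    exact (lintegral_eq_zero_iff' hf).1 hzero
  · rw [hη hpos, ← withDensity_smul' _ _ hfin]
    congr with b
    exact ENNReal.mul_div_cancel hpos.ne' hfin

theorem withDensity_uncurry_eq_compProd {μ : Measure α} {ν : Measure β} [SFinite μ] [SFinite ν]
    {f : α → β → ℝ≥0∞} (hf : Measurable (Function.uncurry f))
    (hfin : ∫⁻ z, Function.uncurry f z ∂(μ.prod ν) ≠ ∞) (κ : Kernel α β) [IsSFiniteKernel κ]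
    (hκ : ∀ a, 0 < ∫⁻ b, f a b ∂ν → ∫⁻ b, f a b ∂ν < ∞ →
      κ a = ν.withDensity fun b => f a b / ∫⁻ b, f a b ∂ν) :
    (μ.prod ν).withDensity (Function.uncurry f) =
      μ.withDensity (fun a => ∫⁻ b, f a b ∂ν) ⊗ₘ κ := by
  have hmarg : Measurable fun a => ∫⁻ b, f a b ∂ν := hf.lintegral_prod_right'
  have hmarg_fin : ∀ᵐ a ∂μ, ∫⁻ b, f a b ∂ν < ∞ :=
    ae_lt_top hmarg (by rwa [lintegral_prod _ hf.aemeasurable] at hfin)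
  have hsection : ∀ᵐ a ∂μ, (∫⁻ b, f a b ∂ν) • κ a = ν.withDensity (f a) := by
    filter_upwards [hmarg_fin] with a ha
    exact lintegral_smul_eq_withDensity hf.of_uncurry_left.aemeasurable ha.ne (hκ a · ha)
  ext s hs
  rw [withDensity_apply _ hs, Measure.compProd_apply hs,
    lintegral_withDensity_eq_lintegral_mul _ hmarg (κ.measurable_kernel_prodMk_left hs),
    ← lintegral_indicator hs, lintegral_prod _ (hf.indicator hs).aemeasurable]
  refine lintegral_congr_ae ?_
  filter_upwards [hsection] with a ha
  rw [Pi.mul_apply, ← smul_eq_mul, ← Measure.smul_apply, ha,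
    withDensity_apply _ (measurable_prodMk_left hs),
    ← lintegral_indicator (measurable_prodMk_left hs)]
  rfl

end MeasureTheory

namespace ProbabilityTheory

theorem IndepFun.map_add_prodMk_eq_withDensity {Ω G : Type*} [MeasurableSpace Ω] [AddGroup G]
    [MeasurableSpace G] [MeasurableAdd₂ G] [MeasurableSub₂ G] {P : Measure Ω} [IsFiniteMeasure P]
    {μ : Measure G} [SFinite μ] [μ.IsAddRightInvariant] {X Y : Ω → G}
    (hX : Measurable X) (hY : Measurable Y) (hindep : IndepFun X Y P) {pX pY : G → ℝ≥0∞}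
    (hpX : Measurable pX) (hpY : Measurable pY)
    (hlawX : P.map X = μ.withDensity pX) (hlawY : P.map Y = μ.withDensity pY) :
    P.map (fun ω => (X ω + Y ω, Y ω)) =
      (μ.prod μ).withDensity fun z => pX (z.1 - z.2) * pY z.2 := by
  have hshear : Measurable fun z : G × G => (z.1 + z.2, z.2) := by fun_prop
  have hdensity : Measurable fun z : G × G => pX (z.1 - z.2) * pY z.2 := by fun_prop
  have hlaw : P.map (fun ω => (X ω, Y ω)) =
      (μ.prod μ).withDensity ((fun z => pX (z.1 - z.2) * pY z.2) ∘ fun z => (z.1 + z.2, z.2)) := by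
    rw [(indepFun_iff_map_prod_eq_prod_map_map hX.aemeasurable hY.aemeasurable).1 hindep,
      hlawX, hlawY, prod_withDensity hpX hpY]
    simp_rw [Function.comp_def, add_sub_cancel_right]
  change P.map ((fun z : G × G => (z.1 + z.2, z.2)) ∘ fun ω => (X ω, Y ω)) = _
  rw [← Measure.map_map hshear (hX.prodMk hY), hlaw, Measure.map_withDensity_comp hshear hdensity,
    (measurePreserving_add_prod μ μ).map_eq]

end ProbabilityTheory

theorem kernel_is_condDistrib_of_densities_general
    {Ω : Type*} [MeasurableSpace Ω] (P : Measure Ω) [IsProbabilityMeasure P]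
    (X Y : Ω → ℝ) (hX : Measurable X) (hY : Measurable Y)
    (hindep : IndepFun X Y P)
    (gV gH : ℝ → ℝ) (hgVm : Measurable gV) (hgHm : Measurable gH)
    (hgV0 : ∀ x, 0 ≤ gV x)
    (hlawX : Measure.map X P = volume.withDensity fun x => ENNReal.ofReal (gV x))
    (hlawY : Measure.map Y P = volume.withDensity fun x => ENNReal.ofReal (gH x))
    (G : ℝ → ℝ≥0∞) (hG : G = fun s => ∫⁻ t, ENNReal.ofReal (gV (s - t) * gH t))
    (κ : Kernel ℝ ℝ) [IsMarkovKernel κ]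
    (hκ : ∀ s, 0 < G s → G s < ⊤ →
      κ s = volume.withDensity fun t => ENNReal.ofReal (gV (s - t) * gH t) / G s) :
    (∀ A B : Set ℝ, MeasurableSet A → MeasurableSet B →
      P ((fun ω => X ω + Y ω) ⁻¹' A ∩ Y ⁻¹' B)
        = ∫⁻ s in A, κ s B ∂(Measure.map (fun ω => X ω + Y ω) P)) ∧
    (∀ᵐ s ∂(Measure.map (fun ω => X ω + Y ω) P),
      κ s = condDistrib Y (fun ω => X ω + Y ω) P s) := by
  subst hG
  set f : ℝ → ℝ → ℝ≥0∞ := fun s t => ENNReal.ofReal (gV (s - t) * gH t)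
  have hf : Measurable (Function.uncurry f) := by fun_prop
  have hjoint : P.map (fun ω => (X ω + Y ω, Y ω)) =
      (volume.prod volume).withDensity (Function.uncurry f) := by
    rw [hindep.map_add_prodMk_eq_withDensity hX hY hgVm.ennreal_ofReal hgHm.ennreal_ofReal
      hlawX hlawY]
    simp_rw [f, Function.uncurry_def, ENNReal.ofReal_mul (hgV0 _)]
  have hfin : ∫⁻ z, Function.uncurry f z ∂(volume.prod volume) ≠ ∞ := by
    rw [← setLIntegral_univ, ← withDensity_apply _ .univ, ← hjoint]
    simp
  have hdisintegration := withDensity_uncurry_eq_compProd hf hfin κ hκ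
  have hlawS : P.map (fun ω => X ω + Y ω) = volume.withDensity fun s => ∫⁻ t, f s t := by
    rw [← Measure.fst_map_prodMk hY, hjoint, hdisintegration, Measure.fst_compProd]
  have hcomp : P.map (fun ω => (X ω + Y ω, Y ω)) = P.map (fun ω => X ω + Y ω) ⊗ₘ κ := by
    rw [hjoint, hdisintegration, hlawS]
  refine ⟨fun A B hA hB => ?_,
    (condDistrib_ae_eq_of_measure_eq_compProd_of_measurable (hX.add hY) hY hcomp).symm⟩
  rw [← Measure.compProd_apply_prod hA hB, ← hcomp, Measure.map_apply (by fun_prop) (hA.prod hB)]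
  rfl

/-- if `X` and `Y` are independent with densities `g_V`, `g_H`, then
the kernel with density `t ↦ g_V(s-t) g_H(t) / G(s)` (where `G = g_V ∗ g_H`, defined
whenever `0 < G(s) < ∞`) is a regular conditional distribution of `Y` given `X + Y`;
in particular it agrees a.e. with `condDistrib`. -/
theorem kernel_is_condDistrib_of_densities
    {Ω : Type*} [MeasurableSpace Ω] (P : Measure Ω) [IsProbabilityMeasure P]
    (X Y : Ω → ℝ) (hX : Measurable X) (hY : Measurable Y)
    (hindep : IndepFun X Y P)
    (gV gH : ℝ → ℝ) (hgVm : Measurable gV) (hgHm : Measurable gH)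
    (hgV0 : ∀ x, 0 ≤ gV x) (hgH0 : ∀ x, 0 ≤ gH x)
    (hlawX : Measure.map X P = volume.withDensity fun x => ENNReal.ofReal (gV x))
    (hlawY : Measure.map Y P = volume.withDensity fun x => ENNReal.ofReal (gH x))
    (G : ℝ → ℝ≥0∞) (hG : G = fun s => ∫⁻ t, ENNReal.ofReal (gV (s - t) * gH t))
    (κ : Kernel ℝ ℝ) [IsMarkovKernel κ]
    (hκ : ∀ s, 0 < G s → G s < ⊤ →
      κ s = volume.withDensity fun t => ENNReal.ofReal (gV (s - t) * gH t) / G s) :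
    (∀ A B : Set ℝ, MeasurableSet A → MeasurableSet B →
      P ((fun ω => X ω + Y ω) ⁻¹' A ∩ Y ⁻¹' B)
        = ∫⁻ s in A, κ s B ∂(Measure.map (fun ω => X ω + Y ω) P)) ∧
    (∀ᵐ s ∂(Measure.map (fun ω => X ω + Y ω) P),
      κ s = condDistrib Y (fun ω => X ω + Y ω) P s) :=
  kernel_is_condDistrib_of_densities_general P X Y hX hY hindep gV gH hgVm hgHm hgV0 hlawX hlawY G
    hG κ hκ
end

section
/- Let X and Y be independent random variables such that −X is exponential with rate γ_V > 0 and Y is exponential with rate γ_H > 0. Then a regular conditional distribution of Y given X+Y is given by the kernel κ where κ(s) is the probability measure on ℝ with density t ↦ (γ_V+γ_H) · exp(−(γ_V+γ_H)(t − max(s,0))) · 1[t ≥ max(s,0)]; equivalently, for (law of X+Y)-almost every s ∈ ℝ, the conditional distribution of Y given X+Y = s is the law of max(s,0) + Z where Z is exponential with rate γ_V+γ_H. -/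
/-!
With `U = -X`, the pair `(X + Y, Y)` is the image of `(U, Y)` under the volume-preserving shear
`(u, y) ↦ (y - u, y)`, so it has joint density `f_V (t - s) f_H t`, where `f_V`, `f_H` are the
exponential densities. For `t ≥ max s 0` this factors as
`c(s) · (γV + γH) exp(-(γV + γH)(t - max s 0))` with `c` the density of `X + Y`, and it vanishes
otherwise. Hence the joint law is `law(X + Y) ⊗ₘ κ`, and `condDistrib` is a.e. unique
with this property.
-/

open MeasureTheory ProbabilityTheory
open scoped ENNReal

lemma MeasureTheory.MeasurePreserving.map_withDensity {α β : Type*} [MeasurableSpace α]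
    [MeasurableSpace β] {μ : Measure α} {ν : Measure β} {e : α ≃ᵐ β}
    (he : MeasurePreserving e μ ν) (f : α → ℝ≥0∞) :
    (μ.withDensity f).map e = ν.withDensity (f ∘ e.symm) := by
  ext s hs
  rw [Measure.map_apply e.measurable hs, withDensity_apply _ (e.measurable hs),
    withDensity_apply _ hs, ← he.setLIntegral_comp_preimage_emb e.measurableEmbedding]
  simp

lemma map_const_add_withDensity {G : Type*} [AddCommGroup G] [MeasurableSpace G]
    [MeasurableAdd G] (μ : Measure G) [μ.IsAddLeftInvariant] (f : G → ℝ≥0∞) (m : G) :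
    (μ.withDensity f).map (m + ·) = μ.withDensity fun t => f (t - m) := by
  rw [← MeasurableEquiv.coe_addLeft, (measurePreserving_add_left μ m).map_withDensity]
  simp [Function.comp_def, neg_add_eq_sub]

section Shear

variable {G : Type*} [AddCommGroup G] [MeasurableSpace G] [MeasurableAdd₂ G] [MeasurableNeg G]

def MeasurableEquiv.subShear : G × G ≃ᵐ G × G where
  toFun p := (p.2 - p.1, p.2)
  invFun p := (p.2 - p.1, p.2)
  left_inv p := by simp
  right_inv p := by simp
  measurable_toFun := (measurable_snd.sub measurable_fst).prodMk measurable_snd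
  measurable_invFun := (measurable_snd.sub measurable_fst).prodMk measurable_snd

lemma measurePreserving_subShear (μ ν : Measure G) [SFinite μ] [SFinite ν]
    [μ.IsAddLeftInvariant] [μ.IsNegInvariant] :
    MeasurePreserving (MeasurableEquiv.subShear : G × G ≃ᵐ G × G) (μ.prod ν) (μ.prod ν) := by
  have hskew : MeasurePreserving (fun p : G × G => (p.1, p.1 - p.2)) (ν.prod μ) (ν.prod μ) :=
    (MeasurePreserving.id ν).skew_product (by fun_prop)
      (Filter.Eventually.of_forall fun y => (Measure.measurePreserving_sub_left μ y).map_eq)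
  exact (Measure.measurePreserving_swap.comp hskew).comp Measure.measurePreserving_swap

end Shear

lemma MeasureTheory.Measure.withDensity_mul_eq_compProd {α β : Type*} [MeasurableSpace α]
    [MeasurableSpace β] (μ : Measure α) (ν : Measure β) [SFinite μ] [SFinite ν]
    {c : α → ℝ≥0∞} (hc : Measurable c) {k : α → β → ℝ≥0∞} (hk : Measurable (Function.uncurry k))
    (κ : Kernel α β) [IsSFiniteKernel κ] (hκ : ∀ a, κ a = ν.withDensity (k a)) :
    (μ.prod ν).withDensity (fun p => c p.1 * k p.1 p.2) = μ.withDensity c ⊗ₘ κ := by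
  obtain rfl : κ = (Kernel.const α ν).withDensity k := by
    ext1 a
    rw [hκ, Kernel.withDensity_apply _ hk, Kernel.const_apply]
  rw [Measure.compProd_withDensity hk, Measure.compProd_const, prod_withDensity_left hc]
  exact withDensity_mul _ (hc.comp measurable_fst) hk

noncomputable def expDiffPDF (a b s : ℝ) : ℝ≥0∞ :=
  ENNReal.ofReal (a * b / (a + b) * Real.exp (a * s - (a + b) * max s 0))

lemma measurable_expDiffPDF (a b : ℝ) : Measurable (expDiffPDF a b) :=
  Measurable.ennreal_ofReal (by fun_prop)

lemma measurable_exponentialPDF (r : ℝ) : Measurable (exponentialPDF r) :=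
  (measurable_exponentialPDFReal r).ennreal_ofReal

lemma exponentialPDF_sub_mul_exponentialPDF {a b : ℝ} (ha : 0 < a) (hb : 0 < b) (s t : ℝ) :
    exponentialPDF a (t - s) * exponentialPDF b t
      = expDiffPDF a b s * exponentialPDF (a + b) (t - max s 0) := by
  rcases le_or_gt (max s 0) t with h | h
  · have hs := le_trans (le_max_left s 0) h
    have ht := le_trans (le_max_right s 0) h
    rw [exponentialPDF_of_nonneg (sub_nonneg.2 hs), exponentialPDF_of_nonneg ht,
      exponentialPDF_of_nonneg (sub_nonneg.2 h), expDiffPDF,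
      ← ENNReal.ofReal_mul (by positivity), ← ENNReal.ofReal_mul (by positivity)]
    congr 1
    have hab : a + b ≠ 0 := by positivity
    field_simp
    rw [← Real.exp_add, ← Real.exp_add]
    ring_nf
  · rw [exponentialPDF_of_neg (sub_neg.2 h), mul_zero]
    rcases lt_max_iff.mp h with hs | ht
    · rw [exponentialPDF_of_neg (sub_neg.2 hs), zero_mul]
    · rw [exponentialPDF_of_neg ht, mul_zero]

lemma map_subShear_exponential_eq_compProd {a b : ℝ} (ha : 0 < a) (hb : 0 < b)
    (κ : Kernel ℝ ℝ) [IsSFiniteKernel κ]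
    (hκ : ∀ s, κ s = volume.withDensity fun t => exponentialPDF (a + b) (t - max s 0)) :
    ((volume.withDensity (exponentialPDF a)).prod (volume.withDensity (exponentialPDF b))).map
        MeasurableEquiv.subShear
      = volume.withDensity (expDiffPDF a b) ⊗ₘ κ := by
  rw [prod_withDensity (measurable_exponentialPDF a) (measurable_exponentialPDF b),
    (measurePreserving_subShear volume volume).map_withDensity,
    ← Measure.withDensity_mul_eq_compProd volume volume (measurable_expDiffPDF a b) _ κ hκ]
  · congr 1
    funext p
    exact exponentialPDF_sub_mul_exponentialPDF ha hb p.1 p.2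
  · exact (measurable_exponentialPDF _).comp (by fun_prop)

/-- if `-X` is exponential with rate `γ_V` and `Y` is exponential
with rate `γ_H`, independent, then the kernel with density
`t ↦ (γ_V+γ_H) exp(-(γ_V+γ_H)(t - max(s,0))) 1[t ≥ max(s,0)]` is a regular
conditional distribution of `Y` given `X + Y`; equivalently, a.e. the conditional law
of `Y` given `X + Y = s` is `max(s,0)` plus an exponential of rate `γ_V + γ_H`. -/
theorem exp_minus_exp_cond
    {Ω : Type*} [MeasurableSpace Ω] (P : Measure Ω) [IsProbabilityMeasure P]
    (γV γH : ℝ) (hγV : 0 < γV) (hγH : 0 < γH)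
    (X Y : Ω → ℝ) (hX : Measurable X) (hY : Measurable Y)
    (hindep : IndepFun X Y P)
    (hlawX : Measure.map (fun ω => -X ω) P = volume.withDensity fun t =>
      ENNReal.ofReal (if 0 ≤ t then γV * Real.exp (-(γV * t)) else 0))
    (hlawY : Measure.map Y P = volume.withDensity fun t =>
      ENNReal.ofReal (if 0 ≤ t then γH * Real.exp (-(γH * t)) else 0))
    (κ : Kernel ℝ ℝ) [IsMarkovKernel κ]
    (hκ : ∀ s : ℝ, κ s = volume.withDensity fun t =>
      ENNReal.ofReal (if max s 0 ≤ t then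
        (γV + γH) * Real.exp (-((γV + γH) * (t - max s 0))) else 0)) :
    (∀ A B : Set ℝ, MeasurableSet A → MeasurableSet B →
      P ((fun ω => X ω + Y ω) ⁻¹' A ∩ Y ⁻¹' B)
        = ∫⁻ s in A, κ s B ∂(Measure.map (fun ω => X ω + Y ω) P)) ∧
    (∀ᵐ s ∂(Measure.map (fun ω => X ω + Y ω) P),
      κ s = condDistrib Y (fun ω => X ω + Y ω) P s) ∧
    (∀ᵐ s ∂(Measure.map (fun ω => X ω + Y ω) P),
      condDistrib Y (fun ω => X ω + Y ω) P s
        = Measure.map (fun z => max s 0 + z)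
            (volume.withDensity fun t =>
              ENNReal.ofReal (if 0 ≤ t then
                (γV + γH) * Real.exp (-((γV + γH) * t)) else 0))) := by
  simp only [← exponentialPDF_eq] at hlawX hlawY ⊢
  have hκ' (s : ℝ) :
      κ s = volume.withDensity fun t => exponentialPDF (γV + γH) (t - max s 0) := by
    simp only [hκ, exponentialPDF_eq, sub_nonneg]
  have hjoint : P.map (fun ω => (X ω + Y ω, Y ω))
      = volume.withDensity (expDiffPDF γV γH) ⊗ₘ κ := by
    have hpair : P.map (fun ω => (-X ω, Y ω)) = (P.map fun ω => -X ω).prod (P.map Y) :=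
      (indepFun_iff_map_prod_eq_prod_map_map hX.neg.aemeasurable hY.aemeasurable).mp
        (hindep.comp measurable_neg measurable_id)
    rw [← map_subShear_exponential_eq_compProd hγV hγH κ hκ', ← hlawX, ← hlawY, ← hpair,
      Measure.map_map MeasurableEquiv.subShear.measurable (by fun_prop)]
    congr 1
    funext ω
    simp [MeasurableEquiv.subShear, add_comm]
  have hsum : P.map (fun ω => X ω + Y ω) = volume.withDensity (expDiffPDF γV γH) := by
    rw [← Measure.fst_map_prodMk hY, hjoint, Measure.fst_compProd]
  rw [← hsum] at hjoint
  have hcond := condDistrib_ae_eq_of_measure_eq_compProd _ hY.aemeasurable hjoint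
  refine ⟨fun A B hA hB => ?_, ?_, ?_⟩
  · rw [← Measure.compProd_apply_prod hA hB, ← hjoint,
      Measure.map_apply (by fun_prop) (hA.prod hB), Set.mk_preimage_prod]
  · filter_upwards [hcond] with s hs using hs.symm
  · filter_upwards [hcond] with s hs
    rw [hs, hκ', map_const_add_withDensity]
end

section
/- Let X and Y be independent integer-valued random variables such that −X is geometric with parameter q_V ∈ (0,1) and Y is geometric with parameter q_H ∈ (0,1), and set r = q_V + q_H − q_V q_H. Then for every integer s and every natural number t with t ≥ max(s,0), ℙ(X+Y = s) > 0 and ℙ(Y = t | X+Y = s) = r(1−r)^{t − max(s,0)}; that is, conditionally on X+Y = s, the random variable Y − max(s,0) is geometric with parameter q_V + q_H − q_V q_H. -/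
/-!
Splitting `{X + Y = s}` according to the value `k` of `Y`, independence gives
`P(X + Y = s) = ∑ₖ P(-X = k - s) P(Y = k)`. The summand vanishes for `k < max s 0` and equals
`c ((1 - q_V)(1 - q_H))^(k - max s 0)` beyond, so the sum is the geometric series `c / r` with
`r = 1 - (1 - q_V)(1 - q_H)`; dividing the summand at `k = t` by it leaves
`r (1 - r)^(t - max s 0)`.
-/

open MeasureTheory ProbabilityTheory
open scoped ENNReal

theorem tsum_int_eq_tsum_nat_of_eq_zero_of_lt {M : Type*} [AddCommMonoid M] [TopologicalSpace M]
    {f : ℤ → M} (m : ℤ) (hf : ∀ k < m, f k = 0) : ∑' k, f k = ∑' j : ℕ, f (m + j) := by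
  refine (Function.Injective.tsum_eq (fun u v h => by simpa using h) fun k hk => ?_).symm
  have hmk : m ≤ k := not_lt.1 fun h => hk (hf k h)
  exact ⟨(k - m).toNat, by simp only; omega⟩

section Convolution

variable {Ω G : Type*} [MeasurableSpace Ω] {P : Measure Ω} [MeasurableSpace G]
  [MeasurableSingletonClass G] {X Y : Ω → G}

theorem ProbabilityTheory.IndepFun.measure_eq_inter_eq (hXY : IndepFun X Y P) (a b : G) :
    P ({ω | X ω = a} ∩ {ω | Y ω = b}) = P {ω | X ω = a} * P {ω | Y ω = b} :=
  hXY.measure_inter_preimage_eq_mul {a} {b} (measurableSet_singleton _)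
    (measurableSet_singleton _)

variable [AddGroup G] [Countable G]

theorem measure_add_eq_tsum (hX : Measurable X) (hY : Measurable Y) (s : G) :
    P {ω | X ω + Y ω = s} = ∑' k, P ({ω | X ω = s - k} ∩ {ω | Y ω = k}) := by
  have hunion : {ω | X ω + Y ω = s} = ⋃ k, {ω | X ω = s - k} ∩ {ω | Y ω = k} := by
    ext ω
    simp [eq_sub_iff_add_eq]
  rw [hunion, measure_iUnion]
  · intro i j hij
    exact Set.disjoint_left.2 fun ω hi hj => hij (hi.2.symm.trans hj.2)
  · exact fun k => (hX (measurableSet_singleton _)).inter (hY (measurableSet_singleton k))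

theorem ProbabilityTheory.IndepFun.measure_add_eq_tsum_mul (hXY : IndepFun X Y P)
    (hX : Measurable X) (hY : Measurable Y) (s : G) :
    P {ω | X ω + Y ω = s} = ∑' k, P {ω | X ω = s - k} * P {ω | Y ω = k} := by
  simp only [measure_add_eq_tsum hX hY, hXY.measure_eq_inter_eq]

theorem ProbabilityTheory.IndepFun.cond_add_eq (hXY : IndepFun X Y P) (hX : Measurable X)
    (hY : Measurable Y) (s t : G) :
    P[|{ω | X ω + Y ω = s}] {ω | Y ω = t}
      = P {ω | X ω = s - t} * P {ω | Y ω = t}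
        / ∑' k, P {ω | X ω = s - k} * P {ω | Y ω = k} := by
  have hcap : {ω | X ω + Y ω = s} ∩ {ω | Y ω = t} = {ω | X ω = s - t} ∩ {ω | Y ω = t} := by
    ext ω
    simp only [Set.mem_inter_iff, Set.mem_ofPred_eq, eq_sub_iff_add_eq]
    exact and_congr_left fun ht => by rw [ht]
  rw [cond_apply' (measurableSet_eq_fun hY measurable_const), hcap, hXY.measure_eq_inter_eq,
    hXY.measure_add_eq_tsum_mul hX hY, div_eq_mul_inv, mul_comm]

end Convolution

noncomputable def geomMassInt (q : ℝ) (k : ℤ) : ℝ≥0∞ :=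
  if 0 ≤ k then ENNReal.ofReal (q * (1 - q) ^ k.toNat) else 0

section GeomMassInt

variable {p q : ℝ}

theorem geomMassInt_of_neg {k : ℤ} (hk : k < 0) : geomMassInt q k = 0 :=
  if_neg hk.not_ge

theorem geomMassInt_ne_zero (hq0 : 0 < q) (hq1 : q < 1) {k : ℤ} (hk : 0 ≤ k) :
    geomMassInt q k ≠ 0 := by
  rw [geomMassInt, if_pos hk, ENNReal.ofReal_ne_zero_iff]
  exact mul_pos hq0 (pow_pos (sub_pos.2 hq1) _)

theorem geomMassInt_ne_top (k : ℤ) : geomMassInt q k ≠ ∞ := by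
  unfold geomMassInt
  split_ifs <;> simp

theorem geomMassInt_add_nat (hq0 : 0 ≤ q) (hq1 : q ≤ 1) {k : ℤ} (hk : 0 ≤ k) (j : ℕ) :
    geomMassInt q (k + j) = geomMassInt q k * ENNReal.ofReal (1 - q) ^ j := by
  have h1q : 0 ≤ 1 - q := sub_nonneg.2 hq1
  rw [geomMassInt, geomMassInt, if_pos (by omega), if_pos hk, ← ENNReal.ofReal_pow h1q,
    ← ENNReal.ofReal_mul (mul_nonneg hq0 (pow_nonneg h1q _)), mul_assoc, ← pow_add,
    show (k + j).toNat = k.toNat + j by omega]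

variable (p q) in
/-- The mass of `(X, Y) = (s - k, k)` when `-X` and `Y` are independent geometric variables with
parameters `p` and `q`. -/
noncomputable def geomConvTerm (s k : ℤ) : ℝ≥0∞ := geomMassInt p (k - s) * geomMassInt q k

theorem geomConvTerm_of_lt {s k : ℤ} (hk : k < max s 0) : geomConvTerm p q s k = 0 := by
  rcases lt_or_ge k 0 with hk0 | hk0
  · rw [geomConvTerm, geomMassInt_of_neg hk0, mul_zero]
  · rw [geomConvTerm, geomMassInt_of_neg (by omega), zero_mul]

theorem geomConvTerm_add_nat (hp0 : 0 ≤ p) (hp1 : p ≤ 1) (hq0 : 0 ≤ q) (hq1 : q ≤ 1)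
    {s k : ℤ} (hk : max s 0 ≤ k) (j : ℕ) :
    geomConvTerm p q s (k + j)
      = geomConvTerm p q s k * ENNReal.ofReal (1 - (p + q - p * q)) ^ j := by
  rw [geomConvTerm, geomConvTerm, add_sub_right_comm, geomMassInt_add_nat hp0 hp1 (by omega),
    geomMassInt_add_nat hq0 hq1 (by omega),
    show 1 - (p + q - p * q) = (1 - p) * (1 - q) by ring,
    ENNReal.ofReal_mul (sub_nonneg.2 hp1), mul_pow]
  ring

theorem tsum_geomConvTerm (hp0 : 0 ≤ p) (hp1 : p ≤ 1) (hq0 : 0 ≤ q) (hq1 : q ≤ 1) (s : ℤ) :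
    ∑' k, geomConvTerm p q s k = geomConvTerm p q s (max s 0) / ENNReal.ofReal (p + q - p * q) := by
  rw [tsum_int_eq_tsum_nat_of_eq_zero_of_lt _ fun k => geomConvTerm_of_lt]
  simp only [geomConvTerm_add_nat hp0 hp1 hq0 hq1 le_rfl]
  rw [ENNReal.tsum_mul_left, ENNReal.tsum_geometric, div_eq_mul_inv,
    ← ENNReal.ofReal_one, ← ENNReal.ofReal_sub _ (sub_nonneg.2 (by nlinarith)), sub_sub_cancel]

theorem geomConvTerm_ne_zero (hp0 : 0 < p) (hp1 : p < 1) (hq0 : 0 < q) (hq1 : q < 1)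
    {s k : ℤ} (hk : max s 0 ≤ k) : geomConvTerm p q s k ≠ 0 :=
  mul_ne_zero (geomMassInt_ne_zero hp0 hp1 (by omega)) (geomMassInt_ne_zero hq0 hq1 (by omega))

theorem tsum_geomConvTerm_ne_zero (hp0 : 0 < p) (hp1 : p < 1) (hq0 : 0 < q) (hq1 : q < 1)
    (s : ℤ) : ∑' k, geomConvTerm p q s k ≠ 0 := by
  rw [tsum_geomConvTerm hp0.le hp1.le hq0.le hq1.le, ← pos_iff_ne_zero, ENNReal.div_pos_iff]
  exact ⟨geomConvTerm_ne_zero hp0 hp1 hq0 hq1 le_rfl, ENNReal.ofReal_ne_top⟩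

theorem geomConvTerm_div_tsum (hp0 : 0 < p) (hp1 : p < 1) (hq0 : 0 < q) (hq1 : q < 1)
    {s : ℤ} {t : ℕ} (ht : max s 0 ≤ t) :
    geomConvTerm p q s t / ∑' k, geomConvTerm p q s k
      = ENNReal.ofReal ((p + q - p * q) * (1 - (p + q - p * q)) ^ (t - (max s 0).toNat)) := by
  have hr : 0 < p + q - p * q := by nlinarith
  have hc := geomConvTerm_ne_zero hp0 hp1 hq0 hq1 (le_refl (max s 0))
  have hc' : geomConvTerm p q s (max s 0) ≠ ∞ :=
    ENNReal.mul_ne_top (geomMassInt_ne_top _) (geomMassInt_ne_top _)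
  have htm : (t : ℤ) = max s 0 + ↑(t - (max s 0).toNat) := by omega
  rw [tsum_geomConvTerm hp0.le hp1.le hq0.le hq1.le, htm,
    geomConvTerm_add_nat hp0.le hp1.le hq0.le hq1.le le_rfl, div_eq_mul_inv _ (ENNReal.ofReal _),
    ENNReal.mul_div_mul_left _ _ hc hc', div_eq_mul_inv, inv_inv, mul_comm,
    ENNReal.ofReal_mul hr.le, ENNReal.ofReal_pow (by nlinarith)]

end GeomMassInt

theorem geom_minus_geom_cond_general
    {Ω : Type*} [MeasurableSpace Ω] (P : Measure Ω)
    (qV qH : ℝ) (hqV : qV ∈ Set.Ioo (0:ℝ) 1) (hqH : qH ∈ Set.Ioo (0:ℝ) 1)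
    (X Y : Ω → ℤ) (hX : Measurable X) (hY : Measurable Y)
    (hindep : IndepFun X Y P)
    (hlawX : ∀ k : ℤ, P {ω | -X ω = k}
      = if 0 ≤ k then ENNReal.ofReal (qV * (1 - qV) ^ k.toNat) else 0)
    (hlawY : ∀ k : ℤ, P {ω | Y ω = k}
      = if 0 ≤ k then ENNReal.ofReal (qH * (1 - qH) ^ k.toNat) else 0)
    (s : ℤ) (t : ℕ) (hts : max s 0 ≤ (t : ℤ)) :
    0 < P {ω | X ω + Y ω = s} ∧
    P[|{ω | X ω + Y ω = s}] {ω | Y ω = (t : ℤ)}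
      = ENNReal.ofReal ((qV + qH - qV * qH)
          * (1 - (qV + qH - qV * qH)) ^ (t - (max s 0).toNat)) := by
  obtain ⟨hqV0, hqV1⟩ := hqV
  obtain ⟨hqH0, hqH1⟩ := hqH
  have hterm : ∀ k : ℤ, P {ω | X ω = s - k} * P {ω | Y ω = k} = geomConvTerm qV qH s k := by
    intro k
    have hXk : {ω | X ω = s - k} = {ω | -X ω = k - s} := by
      ext ω
      simp only [Set.mem_ofPred_eq]
      omega
    rw [hXk, hlawX, hlawY]
    rfl
  refine ⟨?_, ?_⟩
  · rw [hindep.measure_add_eq_tsum_mul hX hY, pos_iff_ne_zero]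
    simp only [hterm]
    exact tsum_geomConvTerm_ne_zero hqV0 hqV1 hqH0 hqH1 s
  · rw [hindep.cond_add_eq hX hY]
    simp only [hterm]
    exact geomConvTerm_div_tsum hqV0 hqV1 hqH0 hqH1 hts

/-- if `-X ~ Geometric(q_V)` and `Y ~ Geometric(q_H)` are
independent (integer-valued), then conditionally on `X + Y = s`,
`Y - max(s,0)` is geometric with parameter `q_V + q_H - q_V q_H`. -/
theorem geom_minus_geom_cond
    {Ω : Type*} [MeasurableSpace Ω] (P : Measure Ω) [IsProbabilityMeasure P]
    (qV qH : ℝ) (hqV : qV ∈ Set.Ioo (0:ℝ) 1) (hqH : qH ∈ Set.Ioo (0:ℝ) 1)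
    (X Y : Ω → ℤ) (hX : Measurable X) (hY : Measurable Y)
    (hindep : IndepFun X Y P)
    (hlawX : ∀ k : ℤ, P {ω | -X ω = k}
      = if 0 ≤ k then ENNReal.ofReal (qV * (1 - qV) ^ k.toNat) else 0)
    (hlawY : ∀ k : ℤ, P {ω | Y ω = k}
      = if 0 ≤ k then ENNReal.ofReal (qH * (1 - qH) ^ k.toNat) else 0)
    (s : ℤ) (t : ℕ) (hts : max s 0 ≤ (t : ℤ)) :
    0 < P {ω | X ω + Y ω = s} ∧
    P[|{ω | X ω + Y ω = s}] {ω | Y ω = (t : ℤ)}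
      = ENNReal.ofReal ((qV + qH - qV * qH)
          * (1 - (qV + qH - qV * qH)) ^ (t - (max s 0).toNat)) :=
  geom_minus_geom_cond_general P qV qH hqV hqH X Y hX hY hindep hlawX hlawY s t hts
end
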